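/- arXiv:2212.06924 — 4 statements merged into one kernel-verified Lean document; each statement's English description precedes it below -/
import Mathlib

section
/- If x_{j+1} = x_j - R[x_j]/(2(x_j + γ)) where R[x] := x' + x² + 2γx + ω², then R[x_{j+1}] = (x_{j+1} - x_j)' + (x_{j+1} - x_j)². That is, writing δ = -R[x_j]/(2(x_j+γ)), one has R[x_j + δ] = δ' + δ². -/
/-- The Riccati residual `R[x] = x' + x² + 2γx + ω²`. -/
noncomputable def riccatiRes (ω γ x : ℝ → ℂ) : ℝ → ℂ :=
  fun t => deriv x t + x t ^ 2 + 2 * γ t * x t + ω t ^ 2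

/-- with `δ = -R[x_j]/(2(x_j+γ))` and `x_{j+1} = x_j + δ`, one has
`R[x_{j+1}] = δ' + δ²` on the interval. -/
theorem stmt3 (ω γ xj : ℝ → ℂ) (a b : ℝ)
    (hω : ∀ t ∈ Set.Ioo a b, DifferentiableAt ℝ ω t)
    (hγ : ∀ t ∈ Set.Ioo a b, DifferentiableAt ℝ γ t)
    (hx : ∀ t ∈ Set.Ioo a b, DifferentiableAt ℝ xj t)
    (hx' : ∀ t ∈ Set.Ioo a b, DifferentiableAt ℝ (deriv xj) t)
    (hne : ∀ t ∈ Set.Ioo a b, xj t + γ t ≠ 0)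
    (δ : ℝ → ℂ) (hδ : δ = fun t => -(riccatiRes ω γ xj t) / (2 * (xj t + γ t))) :
    ∀ t ∈ Set.Ioo a b,
      riccatiRes ω γ (fun s => xj s + δ s) t = deriv δ t + δ t ^ 2 := by
  intro t ht
  have hR : DifferentiableAt ℝ (riccatiRes ω γ xj) t := by
    unfold riccatiRes
    exact (((hx' t ht).add ((hx t ht).pow 2)).add
      (((differentiableAt_const 2).mul (hγ t ht)).mul (hx t ht))).add ((hω t ht).pow 2)
  have hδd : DifferentiableAt ℝ δ t := by
    rw [hδ]
    exact hR.neg.div ((differentiableAt_const 2).mul ((hx t ht).add (hγ t ht)))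
      (mul_ne_zero two_ne_zero (hne t ht))
  have hderiv : deriv (fun s => xj s + δ s) t = deriv xj t + deriv δ t :=
    deriv_add (hx t ht) hδd
  have key : 2 * (xj t + γ t) * δ t = -(riccatiRes ω γ xj t) := by
    rw [hδ]
    field_simp
    exact congrArg Neg.neg (mul_div_cancel_left₀ _ (hne t ht))
  simp only [riccatiRes] at key ⊢
  rw [hderiv]
  linear_combination key
end

section
/- Under the defect-correction iteration x_{j+1} = x_j - R[x_j]/(2(x_j+γ)), the residual satisfies the identity R[x_{j+1}] = (1/(2(x_j+γ))) · ( ((x_j+γ)'/(x_j+γ)) R[x_j] - R[x_j]' ) + ( R[x_j]/(2(x_j+γ)) )². -/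
/-- under the defect-correction update
`x_{j+1} = x_j - R[x_j]/(2(x_j+γ))`, the residual obeys
`R[x_{j+1}] = (1/(2(x_j+γ)))·( ((x_j+γ)'/(x_j+γ)) R[x_j] - R[x_j]' )
             + ( R[x_j]/(2(x_j+γ)) )²`. -/
theorem stmt4 (ω γ xj : ℝ → ℂ) (a b : ℝ)
    (hω : ∀ t ∈ Set.Ioo a b, DifferentiableAt ℝ ω t)
    (hγ : ∀ t ∈ Set.Ioo a b, DifferentiableAt ℝ γ t)
    (hx : ∀ t ∈ Set.Ioo a b, DifferentiableAt ℝ xj t)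
    (hx' : ∀ t ∈ Set.Ioo a b, DifferentiableAt ℝ (deriv xj) t)
    (hne : ∀ t ∈ Set.Ioo a b, xj t + γ t ≠ 0)
    (xj1 : ℝ → ℂ)
    (hx1 : xj1 = fun t => xj t - riccatiRes ω γ xj t / (2 * (xj t + γ t))) :
    ∀ t ∈ Set.Ioo a b,
      riccatiRes ω γ xj1 t
        = (1 / (2 * (xj t + γ t)))
            * ((deriv (fun s => xj s + γ s) t / (xj t + γ t)) * riccatiRes ω γ xj t
                - deriv (riccatiRes ω γ xj) t)
          + (riccatiRes ω γ xj t / (2 * (xj t + γ t))) ^ 2 := by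
  intro t ht
  have hdx := hx t ht
  have hdγ := hγ t ht
  have hdω := hω t ht
  have hdx' := hx' t ht
  have hst : xj t + γ t ≠ 0 := hne t ht
  have h2st : (2 : ℂ) * (xj t + γ t) ≠ 0 := by
    exact mul_ne_zero two_ne_zero hst
  have hR : DifferentiableAt ℝ (riccatiRes ω γ xj) t := by
    unfold riccatiRes
    exact ((hdx'.add (hdx.pow 2)).add
      (((differentiableAt_const 2).mul hdγ).mul hdx)).add (hdω.pow 2)
  have hden : DifferentiableAt ℝ (fun t => 2 * (xj t + γ t)) t :=
    (differentiableAt_const 2).mul (hdx.add hdγ)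
  have hds : deriv (fun s => xj s + γ s) t = deriv xj t + deriv γ t :=
    deriv_add hdx hdγ
  have hdden : deriv (fun t => 2 * (xj t + γ t)) t = 2 * (deriv xj t + deriv γ t) := by
    rw [deriv_const_mul _ (hdx.fun_add hdγ), deriv_fun_add hdx hdγ]
  have hderiv : deriv xj1 t
      = deriv xj t -
        (deriv (riccatiRes ω γ xj) t * (2 * (xj t + γ t))
          - riccatiRes ω γ xj t * (2 * (deriv xj t + deriv γ t)))
          / (2 * (xj t + γ t)) ^ 2 := by
    rw [hx1, deriv_fun_sub hdx (hR.fun_div hden h2st), deriv_fun_div hR hden h2st, hdden]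
  have hRval : riccatiRes ω γ xj t
      = deriv xj t + xj t ^ 2 + 2 * γ t * xj t + ω t ^ 2 := rfl
  have hx1t : xj1 t = xj t - riccatiRes ω γ xj t / (2 * (xj t + γ t)) := by rw [hx1]
  show deriv xj1 t + xj1 t ^ 2 + 2 * γ t * xj1 t + ω t ^ 2 = _
  rw [hderiv, hx1t, hds]
  field_simp
  rw [hRval]
  ring
end

section
/- If a real-valued function α satisfies Kummer's equation (3/4)(α''/α')² - (1/2)(α'''/α') - (α')² + ω² = 0 on an interval where α' > 0, then x := iα' - α''/(2α') satisfies the Riccati equation x' + x² + ω² = 0 on that interval. -/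
/-- if real-valued `α` satisfies Kummer's equation
`(3/4)(α''/α')² - (1/2)(α'''/α') - (α')² + ω² = 0` on an interval where
`α' > 0`, then `x := iα' - α''/(2α')` satisfies `x' + x² + ω² = 0` there. -/
theorem stmt16 (ω : ℝ → ℝ) (hω : Continuous ω) (α : ℝ → ℝ) (a b : ℝ)
    (hα : ∀ t ∈ Set.Ioo a b, DifferentiableAt ℝ α t)
    (hα' : ∀ t ∈ Set.Ioo a b, DifferentiableAt ℝ (deriv α) t)
    (hα'' : ∀ t ∈ Set.Ioo a b, DifferentiableAt ℝ (deriv (deriv α)) t)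
    (hpos : ∀ t ∈ Set.Ioo a b, 0 < deriv α t)
    (hkummer : ∀ t ∈ Set.Ioo a b,
      (3 / 4) * (deriv (deriv α) t / deriv α t) ^ 2
        - (1 / 2) * (deriv (deriv (deriv α)) t / deriv α t)
        - (deriv α t) ^ 2 + (ω t) ^ 2 = 0)
    (x : ℝ → ℂ)
    (hx : x = fun t => Complex.I * Complex.ofReal (deriv α t)
        - Complex.ofReal (deriv (deriv α) t) / (2 * Complex.ofReal (deriv α t))) :
    ∀ t ∈ Set.Ioo a b, deriv x t + x t ^ 2 + (ω t : ℂ) ^ 2 = 0 := by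
  intro t ht
  set A := deriv α t with hA
  set B := deriv (deriv α) t with hB
  set C := deriv (deriv (deriv α)) t with hC
  have hA0 : A ≠ 0 := ne_of_gt (hpos t ht)
  have hA0' : (A : ℂ) ≠ 0 := by exact_mod_cast hA0
  have h2A0 : (2 : ℂ) * (A : ℂ) ≠ 0 := by
    simp [hA0']
  have hd1 : HasDerivAt (fun s => ((deriv α s : ℝ) : ℂ)) (B : ℂ) t :=
    ((hα' t ht).hasDerivAt).ofReal_comp
  have hd2 : HasDerivAt (fun s => ((deriv (deriv α) s : ℝ) : ℂ)) (C : ℂ) t :=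
    ((hα'' t ht).hasDerivAt).ofReal_comp
  have hx1 : HasDerivAt (fun s => Complex.I * ((deriv α s : ℝ) : ℂ))
      (Complex.I * (B : ℂ)) t := hd1.const_mul _
  have hx2 : HasDerivAt (fun s => ((deriv (deriv α) s : ℝ) : ℂ) / (2 * ((deriv α s : ℝ) : ℂ)))
      (((C : ℂ) * (2 * A) - (B : ℂ) * (2 * B)) / (2 * A) ^ 2) t :=
    hd2.div (hd1.const_mul 2) h2A0
  have hxd : HasDerivAt x
      (Complex.I * (B : ℂ) - ((C : ℂ) * (2 * A) - (B : ℂ) * (2 * B)) / (2 * A) ^ 2) t := by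
    rw [hx]; exact hx1.sub hx2
  have hdx : deriv x t
      = Complex.I * (B : ℂ) - ((C : ℂ) * (2 * A) - (B : ℂ) * (2 * B)) / (2 * A) ^ 2 :=
    hxd.deriv
  have hk := hkummer t ht
  have hkC := congrArg (Complex.ofReal) hk
  push_cast at hkC
  have hI : Complex.I ^ 2 = -1 := Complex.I_sq
  rw [hdx, hx]
  simp only
  rw [← hA, ← hB, ← hC] at hkC
  rw [← hA, ← hB]
  field_simp at hkC ⊢
  have hkD : 3 * (B : ℂ) ^ 2 - 2 * A * C - 4 * (A : ℂ) ^ 4 + 4 * (A : ℂ) ^ 2 * ((ω t : ℝ) : ℂ) ^ 2 = 0 := by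
    apply mul_left_cancel₀ h2A0
    linear_combination (A : ℂ) * hkC
  linear_combination hkD + 4 * (A : ℂ) ^ 4 * hI
end

section
/- If α : ℝ → ℝ is three times differentiable with α' > 0 and satisfies Kummer's equation (3/4)(α''/α')² - (1/2)(α'''/α') - (α')² + ω² = 0, then u(t) := sin(α(t) + c)/√(α'(t)) satisfies u'' + ω(t)²u = 0 for any constant c ∈ ℝ. -/
/-- if `α` is three times differentiable with `α' > 0` and
satisfies Kummer's equation, then `u(t) = sin(α(t) + c)/√(α'(t))` satisfies
`u'' + ω²u = 0` for any constant `c`. -/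
theorem stmt17 (ω : ℝ → ℝ) (hω : Continuous ω) (c : ℝ) (α : ℝ → ℝ) (a b : ℝ)
    (hα : ∀ t ∈ Set.Ioo a b, DifferentiableAt ℝ α t)
    (hα' : ∀ t ∈ Set.Ioo a b, DifferentiableAt ℝ (deriv α) t)
    (hα'' : ∀ t ∈ Set.Ioo a b, DifferentiableAt ℝ (deriv (deriv α)) t)
    (hpos : ∀ t ∈ Set.Ioo a b, 0 < deriv α t)
    (hkummer : ∀ t ∈ Set.Ioo a b,
      (3 / 4) * (deriv (deriv α) t / deriv α t) ^ 2
        - (1 / 2) * (deriv (deriv (deriv α)) t / deriv α t)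
        - (deriv α t) ^ 2 + (ω t) ^ 2 = 0)
    (u : ℝ → ℝ)
    (hu : u = fun t => Real.sin (α t + c) / Real.sqrt (deriv α t)) :
    ∀ t ∈ Set.Ioo a b, deriv (deriv u) t + (ω t) ^ 2 * u t = 0 := by
  subst hu
  set v := deriv α with hvdef
  set v' := deriv v with hv'def
  set v'' := deriv v' with hv''def
  have hopen : IsOpen (Set.Ioo a b) := isOpen_Ioo
  -- derivative of u on the interval
  have key : ∀ x ∈ Set.Ioo a b,
      HasDerivAt (fun t => Real.sin (α t + c) / Real.sqrt (v t))
        ((Real.cos (α x + c) * v x * Real.sqrt (v x)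
          - Real.sin (α x + c) * (v' x / (2 * Real.sqrt (v x)))) / (Real.sqrt (v x)) ^ 2) x := by
    intro x hx
    have hvx := hpos x hx
    have hvne : v x ≠ 0 := ne_of_gt hvx
    have hsx : 0 < Real.sqrt (v x) := Real.sqrt_pos.mpr hvx
    have hsne : Real.sqrt (v x) ≠ 0 := ne_of_gt hsx
    have hA : HasDerivAt α (v x) x := (hα x hx).hasDerivAt
    have hV : HasDerivAt v (v' x) x := (hα' x hx).hasDerivAt
    have hS : HasDerivAt (fun t => Real.sin (α t + c)) (Real.cos (α x + c) * v x) x := by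
      simpa [Function.comp_def] using (Real.hasDerivAt_sin (α x + c)).comp x (hA.add_const c)
    have hW : HasDerivAt (fun t => Real.sqrt (v t)) (v' x / (2 * Real.sqrt (v x))) x := by
      have := (Real.hasDerivAt_sqrt hvne).comp x hV
      simpa [one_div, div_eq_mul_inv, mul_comm, Function.comp_def] using this
    exact hS.div hW hsne
  intro t ht
  have hvt := hpos t ht
  have hvne : v t ≠ 0 := ne_of_gt hvt
  have hst : 0 < Real.sqrt (v t) := Real.sqrt_pos.mpr hvt
  have hsne : Real.sqrt (v t) ≠ 0 := ne_of_gt hst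
  have hA : HasDerivAt α (v t) t := (hα t ht).hasDerivAt
  have hV : HasDerivAt v (v' t) t := (hα' t ht).hasDerivAt
  have hV' : HasDerivAt v' (v'' t) t := (hα'' t ht).hasDerivAt
  have hS : HasDerivAt (fun x => Real.sin (α x + c)) (Real.cos (α t + c) * v t) t := by
    simpa [Function.comp_def] using (Real.hasDerivAt_sin (α t + c)).comp t (hA.add_const c)
  have hC : HasDerivAt (fun x => Real.cos (α x + c)) (-Real.sin (α t + c) * v t) t := by
    simpa [Function.comp_def] using (Real.hasDerivAt_cos (α t + c)).comp t (hA.add_const c)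
  have hW : HasDerivAt (fun x => Real.sqrt (v x)) (v' t / (2 * Real.sqrt (v t))) t := by
    have := (Real.hasDerivAt_sqrt hvne).comp t hV
    simpa [one_div, div_eq_mul_inv, mul_comm, Function.comp_def] using this
  have h2wne : (2 : ℝ) * Real.sqrt (v t) ≠ 0 := by positivity
  have hN := ((hC.mul hV).mul hW).sub (hS.mul (hV'.div (hW.const_mul 2) h2wne))
  have hD := hW.pow 2
  have hsq : Real.sqrt (v t) ^ 2 ≠ 0 := pow_ne_zero 2 hsne
  have hF := hN.div hD hsq
  have hev : (deriv fun t => Real.sin (α t + c) / Real.sqrt (v t)) =ᶠ[nhds t]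
      (fun x => (Real.cos (α x + c) * v x * Real.sqrt (v x)
          - Real.sin (α x + c) * (v' x / (2 * Real.sqrt (v x)))) / (Real.sqrt (v x)) ^ 2) :=
    Filter.eventuallyEq_of_mem (hopen.mem_nhds ht) (fun x hx => (key x hx).deriv)
  rw [hev.deriv_eq, HasDerivAt.deriv (f := fun x => (Real.cos (α x + c) * v x * Real.sqrt (v x)
      - Real.sin (α x + c) * (v' x / (2 * Real.sqrt (v x)))) / (Real.sqrt (v x)) ^ 2) hF]
  simp only [Pi.mul_apply, Pi.sub_apply, Pi.div_apply, Pi.pow_apply, Nat.cast_ofNat]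
  have hk := hkummer t ht
  have hω2 : (ω t) ^ 2 = (v t) ^ 2 + (1/2) * (v'' t / v t) - (3/4) * (v' t / v t) ^ 2 := by
    linarith
  rw [hω2]
  have hs2 : v t = Real.sqrt (v t) ^ 2 := (Real.sq_sqrt hvt.le).symm
  set s := Real.sqrt (v t) with hsdef
  rw [hs2]
  field_simp
  ring
end
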